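/- Let n ≥ 3 and let R = ℂ[x₁,…,x_n, y₁,…,y_n] / ⟨∑_{i=1}^n x_i y_i − 1⟩. Then the images x̄_n of x_n and ȳ₁ of y₁ in R are prime elements of R. -/

import Mathlib

/-!
Write `f = ∑ᵢ xᵢyᵢ − 1 = x_j y_j + g` with `g = ∑_{i ≠ j} xᵢyᵢ − 1`. Modulo `f` we have
`g ≡ −x_j y_j`, so the ideal `(x̄_j)` of `R` is the image of `(x_j, g)`, and `R/(x̄_j)` is
`ℂ[all variables but x_j]/(g)` because `x_j` does not occur in `g`. This is a domain since `g` is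
prime: for `k ≠ j`, `g = x_k y_k + h` is linear in `y_k` with coprime coefficients `x_k` and `h`
(the constant term of `h` is `−1`), hence irreducible in the factorial ring `ℂ[x, y]`. The same
argument, with the roles of `x` and `y` exchanged, handles `ȳ_j`.
-/

open MvPolynomial

/-- The defining ideal of `ℂ[x₁,…,xₙ,y₁,…,yₙ]/⟨∑ xᵢ yᵢ − 1⟩`, where the `x` variables are
indexed by `Sum.inl` and the `y` variables by `Sum.inr`. -/
noncomputable def relIdeal (n : ℕ) : Ideal (MvPolynomial (Fin n ⊕ Fin n) ℂ) :=
  Ideal.span {(∑ i : Fin n, X (Sum.inl i) * X (Sum.inr i)) - 1}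

namespace MvPolynomial

variable {R σ : Type*} [CommRing R]

theorem exists_rename_val_eq_of_notMem_vars {w : σ} {p : MvPolynomial σ R} (hw : w ∉ p.vars) :
    ∃ q : MvPolynomial {s // s ≠ w} R, rename Subtype.val q = p :=
  p.exists_rename_eq_of_vars_subset_range _ Subtype.val_injective
    fun s hs => ⟨⟨s, fun h => hw (h ▸ hs)⟩, rfl⟩

section SplitOffVar

variable [DecidableEq σ]

noncomputable def splitOffVarEquiv (w : σ) :
    MvPolynomial σ R ≃ₐ[R] Polynomial (MvPolynomial {s // s ≠ w} R) :=
  (renameEquiv R (Equiv.optionSubtypeNe w).symm).trans (optionEquivLeft R _)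

@[simp]
theorem splitOffVarEquiv_X_self (w : σ) :
    splitOffVarEquiv (R := R) w (X w) = Polynomial.X := by
  simp [splitOffVarEquiv, optionEquivLeft_X_none]

@[simp]
theorem splitOffVarEquiv_X_of_ne {u w : σ} (h : u ≠ w) :
    splitOffVarEquiv (R := R) w (X u) = Polynomial.C (X ⟨u, h⟩) := by
  simp [splitOffVarEquiv, Equiv.optionSubtypeNe_symm_of_ne h, optionEquivLeft_X_some]

@[simp]
theorem splitOffVarEquiv_rename_val (w : σ) (p : MvPolynomial {s // s ≠ w} R) :
    splitOffVarEquiv w (rename Subtype.val p) = Polynomial.C p := by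
  induction p using MvPolynomial.induction_on with
  | C a => simp [splitOffVarEquiv]
  | add p q hp hq => simp [hp, hq]
  | mul_X p s hp => simp [hp, splitOffVarEquiv_X_of_ne s.2]

end SplitOffVar

theorem prime_X_mul_X_add [IsDomain R] [UniqueFactorizationMonoid R] {u w : σ} (huw : u ≠ w)
    {d : MvPolynomial σ R} (hw : w ∉ d.vars) (hd : constantCoeff d ≠ 0) :
    Prime (X u * X w + d) := by
  classical
  obtain ⟨d, rfl⟩ := exists_rename_val_eq_of_notMem_vars hw
  rw [constantCoeff_rename] at hd
  have hXu : ¬ X ⟨u, huw⟩ ∣ d := by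
    rintro ⟨t, rfl⟩
    simp at hd
  rw [← UniqueFactorizationMonoid.irreducible_iff_prime,
    ← MulEquiv.irreducible_iff (splitOffVarEquiv (R := R) w).toMulEquiv]
  simpa [splitOffVarEquiv_X_of_ne huw] using Polynomial.irreducible_C_mul_X_add_C (X_ne_zero _)
    (X_prime.irreducible.isRelPrime_iff_not_dvd.mpr hXu)

theorem isPrime_span_X_pair {v : σ} {c : MvPolynomial σ R} (hv : v ∉ c.vars) (hc : Prime c) :
    (Ideal.span {X v, c}).IsPrime := by
  classical
  obtain ⟨c, rfl⟩ := exists_rename_val_eq_of_notMem_vars hv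
  set e := splitOffVarEquiv (R := R) v
  have hc' : Prime c := by
    rw [← Polynomial.prime_C_iff, ← splitOffVarEquiv_rename_val v]
    exact (MulEquiv.prime_iff e.toMulEquiv).mpr hc
  have hprime : (Ideal.span {Polynomial.C c, Polynomial.X - Polynomial.C 0}).IsPrime := by
    have := (Ideal.span_singleton_prime hc'.ne_zero).mpr hc'
    rw [← Ideal.Quotient.isDomain_iff_prime]
    exact (Polynomial.quotientSpanCXSubCAlgEquiv c 0).toMulEquiv.isDomain _
  have hspan : Ideal.span {X v, rename Subtype.val c} =
      Ideal.map e.symm (Ideal.span {Polynomial.C c, Polynomial.X - Polynomial.C 0}) := by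
    rw [Ideal.map_span, Set.image_pair, Set.pair_comm, map_zero, sub_zero,
      ← splitOffVarEquiv_rename_val v, ← splitOffVarEquiv_X_self, AlgEquiv.symm_apply_apply,
      AlgEquiv.symm_apply_apply]
  rw [hspan]
  exact Ideal.map_isPrime_of_equiv _

end MvPolynomial

theorem Ideal.Quotient.prime_mk_of_isPrime_span_pair {S : Type*} [CommRing S] {a b c : S}
    (hprime : (Ideal.span {a, b}).IsPrime) (ha : a ∉ Ideal.span {a * c + b}) :
    Prime (Ideal.Quotient.mk (Ideal.span {a * c + b}) a) := by
  set mk := Ideal.Quotient.mk (Ideal.span {a * c + b})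
  have hne : mk a ≠ 0 := mt Ideal.Quotient.eq_zero_iff_mem.mp ha
  have hker : RingHom.ker mk ≤ Ideal.span {a, b} := by
    rw [Ideal.mk_ker, Ideal.span_singleton_le_iff_mem, Ideal.mem_span_pair]
    exact ⟨c, 1, by ring⟩
  have hdvd : mk a ∣ mk b := by
    have h0 : mk (a * c + b) = 0 :=
      Ideal.Quotient.eq_zero_iff_mem.mpr (Ideal.mem_span_singleton_self _)
    rw [map_add, map_mul] at h0
    exact ⟨-mk c, by linear_combination h0⟩
  have hspan : Ideal.span {mk a} = Ideal.map mk (Ideal.span {a, b}) := by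
    rw [Ideal.map_span, Set.image_pair, Ideal.span_pair_eq_span_left_iff_dvd.mpr hdvd]
  rw [← Ideal.span_singleton_prime hne, hspan]
  exact Ideal.map_isPrime_of_surjective Ideal.Quotient.mk_surjective hker

section Pairing

open Finset

variable {R ι : Type*} [CommRing R]

noncomputable def pairingSubOne (s : Finset ι) : MvPolynomial (ι ⊕ ι) R :=
  ∑ i ∈ s, X (Sum.inl i) * X (Sum.inr i) - 1

theorem relIdeal_eq_span_pairingSubOne (n : ℕ) :
    relIdeal n = Ideal.span {pairingSubOne univ} :=
  rfl

theorem pairingSubOne_insert [DecidableEq ι] {i : ι} {s : Finset ι} (hi : i ∉ s) :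
    (pairingSubOne (insert i s) : MvPolynomial (ι ⊕ ι) R) =
      X (Sum.inl i) * X (Sum.inr i) + pairingSubOne s := by
  rw [pairingSubOne, pairingSubOne, sum_insert hi, add_sub_assoc]

theorem constantCoeff_pairingSubOne (s : Finset ι) :
    constantCoeff (pairingSubOne s : MvPolynomial (ι ⊕ ι) R) = -1 := by
  simp [pairingSubOne]

theorem mem_vars_pairingSubOne {s : Finset ι} {v : ι ⊕ ι}
    (hv : v ∈ (pairingSubOne s : MvPolynomial (ι ⊕ ι) R).vars) :
    ∃ i ∈ s, v = Sum.inl i ∨ v = Sum.inr i := by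
  classical
  rcases subsingleton_or_nontrivial R with hR | hR
  · simp [Subsingleton.elim (pairingSubOne s) 0] at hv
  have hsum := vars_sub_subset _ hv
  rw [vars_one, Finset.union_empty] at hsum
  obtain ⟨i, hi, hvi⟩ := Finset.mem_biUnion.mp (vars_sum_subset _ _ hsum)
  have hmul := vars_mul _ _ hvi
  rw [vars_X, vars_X, Finset.mem_union, Finset.mem_singleton, Finset.mem_singleton] at hmul
  exact ⟨i, hi, hmul⟩

theorem eval_pairingSubOne_single [DecidableEq ι] {s : Finset ι} {j : ι} (hj : j ∈ s) :
    eval (Sum.elim (Pi.single j 1) (Pi.single j 1))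
      (pairingSubOne s : MvPolynomial (ι ⊕ ι) R) = 0 := by
  simp [pairingSubOne, Pi.single_apply, hj]

theorem prime_pairingSubOne [IsDomain R] [UniqueFactorizationMonoid R] {s : Finset ι}
    (hs : s.Nonempty) : Prime (pairingSubOne s : MvPolynomial (ι ⊕ ι) R) := by
  classical
  obtain ⟨j, hj⟩ := hs
  rw [← insert_erase hj, pairingSubOne_insert (notMem_erase j s)]
  refine prime_X_mul_X_add Sum.inl_ne_inr (fun hv => ?_) (by simp [constantCoeff_pairingSubOne])
  obtain ⟨i, hi, h | h⟩ := mem_vars_pairingSubOne hv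
  · exact Sum.inr_ne_inl h
  · exact notMem_erase j s (Sum.inr_injective h ▸ hi)

theorem prime_mk_X_pairingSubOne [IsDomain R] [UniqueFactorizationMonoid R] {s : Finset ι}
    {j : ι} (hj : j ∈ s) (hs : s.Nontrivial) {v : ι ⊕ ι} (hv : v = Sum.inl j ∨ v = Sum.inr j) :
    Prime (Ideal.Quotient.mk (Ideal.span {pairingSubOne s}) (X v : MvPolynomial (ι ⊕ ι) R)) := by
  classical
  have hsplit : (pairingSubOne s : MvPolynomial (ι ⊕ ι) R) =
      X v * X v.swap + pairingSubOne (s.erase j) := by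
    conv_lhs => rw [← insert_erase hj, pairingSubOne_insert (notMem_erase j s)]
    rcases hv with rfl | rfl
    · rfl
    · rw [Sum.swap_inr, mul_comm]
  have hvars : v ∉ (pairingSubOne (s.erase j) : MvPolynomial (ι ⊕ ι) R).vars := by
    intro hv'
    obtain ⟨i, hi, h | h⟩ := mem_vars_pairingSubOne hv' <;> rcases hv with rfl | rfl <;>
      simp_all
  have hX : X v ∉ Ideal.span {(pairingSubOne s : MvPolynomial (ι ⊕ ι) R)} := by
    rw [Ideal.mem_span_singleton]
    intro hdvd
    have := map_dvd (eval (Sum.elim (Pi.single j 1) (Pi.single j 1))) hdvd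
    rw [eval_pairingSubOne_single hj, zero_dvd_iff] at this
    rcases hv with rfl | rfl <;> simp at this
  rw [hsplit] at hX ⊢
  exact Ideal.Quotient.prime_mk_of_isPrime_span_pair
    (isPrime_span_X_pair hvars (prime_pairingSubOne hs.erase_nonempty)) hX

end Pairing

/-- For `n ≥ 3`, the images of `xₙ` and of `y₁` in
`R = ℂ[x₁,…,xₙ,y₁,…,yₙ]/⟨∑ xᵢ yᵢ − 1⟩` are prime elements of `R`. -/
theorem stmt2 (n : ℕ) (hn : 3 ≤ n) :
    Prime (Ideal.Quotient.mk (relIdeal n) (X (Sum.inl ⟨n - 1, by omega⟩))) ∧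
    Prime (Ideal.Quotient.mk (relIdeal n) (X (Sum.inr ⟨0, by omega⟩))) := by
  have : Nontrivial (Fin n) := Fin.nontrivial_iff_two_le.mpr (by omega)
  rw [relIdeal_eq_span_pairingSubOne]
  exact ⟨prime_mk_X_pairingSubOne (Finset.mem_univ _) Finset.univ_nontrivial (Or.inl rfl),
    prime_mk_X_pairingSubOne (Finset.mem_univ _) Finset.univ_nontrivial (Or.inr rfl)⟩
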